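/- arXiv:2002.04722 — 3 statements merged into one kernel-verified Lean document; each statement's English description precedes it below -/
import Mathlib

section
/- Let u : [0, T_*) → H^1(ℝ^n) with |x|u(t) ∈ L^2, ‖u(t)‖_2 = ‖u_0‖_2 constant, and suppose J(t) := ∫|x|^2|u(t)|^2 satisfies J(t) → 0 as t → T_* with |J'(t)| bounded near T_*. Then there is a constant c_0 > 0 with ‖∇u(t)‖_2 ≥ c_0 ‖u_0‖_2 / √(T_* − t) for t near T_*. -/
/-!
Integrating `x · ∇|u|²` by parts gives `n ∫|u|² = -∫ x · ∇|u|²`, and Cauchy–Schwarz bounds the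
right side by `2 ‖x u‖₂ ‖∇u‖₂`: this is Heisenberg's uncertainty principle
`n ‖u‖₂² ≤ 2 √J ‖∇u‖₂`. Since `J` tends to `0` at `T` with bounded derivative, `J(t) ≤ B (T - t)`,
and mass conservation turns the uncertainty principle into `‖∇u(t)‖₂ ≥ c₀ ‖u₀‖₂ / √(T - t)`.
-/

open MeasureTheory

section CauchySchwarz

variable {α : Type*} [MeasurableSpace α] {μ : Measure α} {f g : α → ℝ}

theorem memLp_two_sqrt (hf : Integrable f μ) (hf0 : 0 ≤ᵐ[μ] f) :
    MemLp (fun x => √(f x)) 2 μ := by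
  refine (memLp_two_iff_integrable_sq
    (Real.continuous_sqrt.comp_aestronglyMeasurable hf.aestronglyMeasurable)).2 ?_
  refine hf.congr ?_
  filter_upwards [hf0] with x hx
  exact (Real.sq_sqrt hx).symm

theorem integral_sqrt_mul_sqrt_le (hf : Integrable f μ) (hg : Integrable g μ)
    (hf0 : 0 ≤ᵐ[μ] f) (hg0 : 0 ≤ᵐ[μ] g) :
    ∫ x, √(f x) * √(g x) ∂μ ≤ √(∫ x, f x ∂μ) * √(∫ x, g x ∂μ) := by
  have h := integral_mul_le_Lp_mul_Lq_of_nonneg Real.HolderConjugate.two_two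
    (Filter.Eventually.of_forall fun x => Real.sqrt_nonneg (f x))
    (Filter.Eventually.of_forall fun x => Real.sqrt_nonneg (g x))
    (by simpa using memLp_two_sqrt hf hf0) (by simpa using memLp_two_sqrt hg hg0)
  have sq_sqrt_ae {h : α → ℝ} (h0 : 0 ≤ᵐ[μ] h) : ∫ x, √(h x) ^ (2 : ℝ) ∂μ = ∫ x, h x ∂μ := by
    refine integral_congr_ae ?_
    filter_upwards [h0] with x hx
    simp [Real.sq_sqrt hx]
  rwa [sq_sqrt_ae hf0, sq_sqrt_ae hg0, ← Real.sqrt_eq_rpow, ← Real.sqrt_eq_rpow] at h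

end CauchySchwarz

section Uncertainty

variable {ι H : Type*} [Fintype ι] [DecidableEq ι] [NormedAddCommGroup H] [InnerProductSpace ℝ H]

theorem abs_fderiv_norm_sq_apply_le {E : Type*} [NormedAddCommGroup E] [NormedSpace ℝ E]
    {F : E → H} {x : E} (hF : DifferentiableAt ℝ F x) (v : E) :
    |fderiv ℝ (fun y => ‖F y‖ ^ 2) x v| ≤ 2 * ‖F x‖ * ‖fderiv ℝ F x v‖ := by
  rw [hF.hasFDerivAt.norm_sq.fderiv]
  simpa [abs_mul, mul_assoc] using abs_real_inner_le_norm (F x) (fderiv ℝ F x v)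

theorem abs_sum_coord_mul_fderiv_norm_sq_le {F : EuclideanSpace ℝ ι → H}
    {x : EuclideanSpace ℝ ι} (hF : DifferentiableAt ℝ F x) :
    |∑ i, x i * fderiv ℝ (fun y => ‖F y‖ ^ 2) x (EuclideanSpace.single i 1)| ≤
      2 * ‖F x‖ * ‖x‖ * √(∑ i, ‖fderiv ℝ F x (EuclideanSpace.single i 1)‖ ^ 2) := by
  calc _ ≤ ∑ i, |x i| * (2 * ‖F x‖ * ‖fderiv ℝ F x (EuclideanSpace.single i 1)‖) := by
        refine (Finset.abs_sum_le_sum_abs _ _).trans (Finset.sum_le_sum fun i _ => ?_)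
        rw [abs_mul]
        exact mul_le_mul_of_nonneg_left (abs_fderiv_norm_sq_apply_le hF _) (abs_nonneg _)
    _ = 2 * ‖F x‖ * ∑ i, |x i| * ‖fderiv ℝ F x (EuclideanSpace.single i 1)‖ := by
        rw [Finset.mul_sum]; congr 1; funext i; ring
    _ ≤ 2 * ‖F x‖ * (‖x‖ * √(∑ i, ‖fderiv ℝ F x (EuclideanSpace.single i 1)‖ ^ 2)) := by
        gcongr
        simpa [EuclideanSpace.norm_eq] using Real.sum_mul_le_sqrt_mul_sqrt Finset.univ
          (fun i => |x i|) (fun i => ‖fderiv ℝ F x (EuclideanSpace.single i 1)‖)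
    _ = _ := by ring

theorem integral_coord_mul_fderiv_eq_neg_integral {μ : Measure (EuclideanSpace ℝ ι)}
    [μ.IsAddHaarMeasure] {g : EuclideanSpace ℝ ι → ℝ} (hg : Differentiable ℝ g) (i : ι)
    (hg_int : Integrable g μ) (hxg : Integrable (fun x => x i * g x) μ)
    (hxg' : Integrable (fun x => x i * fderiv ℝ g x (EuclideanSpace.single i 1)) μ) :
    ∫ x, x i * fderiv ℝ g x (EuclideanSpace.single i 1) ∂μ = -∫ x, g x ∂μ := by
  have hcoord (x : EuclideanSpace ℝ ι) :
      fderiv ℝ (fun y : EuclideanSpace ℝ ι => y i) x (EuclideanSpace.single i 1) = 1 := by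
    rw [show (fun y : EuclideanSpace ℝ ι => y i) = EuclideanSpace.proj (𝕜 := ℝ) i from rfl,
      ContinuousLinearMap.fderiv]
    simp
  rw [integral_mul_fderiv_eq_neg_fderiv_mul_of_integrable (by simpa [hcoord] using hg_int) hxg' hxg
    (fun x _ => (EuclideanSpace.proj (𝕜 := ℝ) i).differentiableAt) (fun x _ => hg x)]
  simp [hcoord]

theorem integral_sum_coord_mul_fderiv_norm_sq {μ : Measure (EuclideanSpace ℝ ι)}
    [μ.IsAddHaarMeasure] {F : EuclideanSpace ℝ ι → H} (hF : Differentiable ℝ F)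
    (hF_int : Integrable (fun x => ‖F x‖ ^ 2) μ)
    (hxF_int : Integrable (fun x => ‖x‖ ^ 2 * ‖F x‖ ^ 2) μ)
    (hdF_int : Integrable (fun x => ∑ i, ‖fderiv ℝ F x (EuclideanSpace.single i 1)‖ ^ 2) μ) :
    ∫ x, ∑ i, x i * fderiv ℝ (fun y => ‖F y‖ ^ 2) x (EuclideanSpace.single i 1) ∂μ =
      -(Fintype.card ι * ∫ x, ‖F x‖ ^ 2 ∂μ) := by
  set g : EuclideanSpace ℝ ι → ℝ := fun y => ‖F y‖ ^ 2
  have hg : Differentiable ℝ g := fun x => (hF x).hasFDerivAt.norm_sq.differentiableAt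
  have hxg (i : ι) : Integrable (fun x => x i * g x) μ := by
    refine (hF_int.add hxF_int).mono'
      ((EuclideanSpace.proj (𝕜 := ℝ) i).continuous.mul hg.continuous).aestronglyMeasurable
      (Filter.Eventually.of_forall fun x => ?_)
    have hxi : |x i| ≤ 1 + ‖x‖ ^ 2 := by
      nlinarith [PiLp.norm_apply_le x i, Real.norm_eq_abs (x i)]
    simpa [g, abs_mul, add_mul] using mul_le_mul_of_nonneg_right hxi (by positivity : 0 ≤ g x)
  have hxg' (i : ι) : Integrable (fun x => x i * fderiv ℝ g x (EuclideanSpace.single i 1)) μ := by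
    refine (hxF_int.add hdF_int).mono'
      ((EuclideanSpace.proj (𝕜 := ℝ) i).continuous.measurable.mul
        (measurable_fderiv_apply_const ℝ g _)).aestronglyMeasurable
      (Filter.Eventually.of_forall fun x => ?_)
    have hxi : |x i| ≤ ‖x‖ := by simpa using PiLp.norm_apply_le x i
    have hdi : ‖fderiv ℝ F x (EuclideanSpace.single i 1)‖ ^ 2 ≤
        ∑ j, ‖fderiv ℝ F x (EuclideanSpace.single j 1)‖ ^ 2 :=
      Finset.single_le_sum (f := fun j => ‖fderiv ℝ F x (EuclideanSpace.single j 1)‖ ^ 2)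
        (fun j _ => by positivity) (Finset.mem_univ i)
    have hgi := abs_fderiv_norm_sq_apply_le (hF x) (EuclideanSpace.single i 1)
    rw [Real.norm_eq_abs, abs_mul]
    calc |x i| * |fderiv ℝ g x (EuclideanSpace.single i 1)|
        ≤ ‖x‖ * (2 * ‖F x‖ * ‖fderiv ℝ F x (EuclideanSpace.single i 1)‖) := by gcongr
      _ ≤ ‖x‖ ^ 2 * ‖F x‖ ^ 2 + ∑ j, ‖fderiv ℝ F x (EuclideanSpace.single j 1)‖ ^ 2 := by
        nlinarith [sq_nonneg (‖x‖ * ‖F x‖ - ‖fderiv ℝ F x (EuclideanSpace.single i 1)‖)]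
  rw [integral_finsetSum _ fun i _ => hxg' i]
  simp [integral_coord_mul_fderiv_eq_neg_integral hg _ hF_int (hxg _) (hxg' _)]

theorem heisenberg_uncertainty {μ : Measure (EuclideanSpace ℝ ι)} [μ.IsAddHaarMeasure]
    {F : EuclideanSpace ℝ ι → H} (hF : Differentiable ℝ F)
    (hF_int : Integrable (fun x => ‖F x‖ ^ 2) μ)
    (hxF_int : Integrable (fun x => ‖x‖ ^ 2 * ‖F x‖ ^ 2) μ)
    (hdF_int : Integrable (fun x => ∑ i, ‖fderiv ℝ F x (EuclideanSpace.single i 1)‖ ^ 2) μ) :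
    Fintype.card ι * ∫ x, ‖F x‖ ^ 2 ∂μ ≤
      2 * √(∫ x, ‖x‖ ^ 2 * ‖F x‖ ^ 2 ∂μ) *
        √(∫ x, ∑ i, ‖fderiv ℝ F x (EuclideanSpace.single i 1)‖ ^ 2 ∂μ) := by
  set dF : EuclideanSpace ℝ ι → ℝ :=
    fun x => ∑ i, ‖fderiv ℝ F x (EuclideanSpace.single i 1)‖ ^ 2
  have hbound : Integrable (fun x => 2 * (√(‖x‖ ^ 2 * ‖F x‖ ^ 2) * √(dF x))) μ :=
    ((memLp_two_sqrt hxF_int (Filter.Eventually.of_forall fun x => by positivity)).integrable_mul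
      (memLp_two_sqrt hdF_int (Filter.Eventually.of_forall fun x => by positivity))).const_mul 2
  calc (Fintype.card ι : ℝ) * ∫ x, ‖F x‖ ^ 2 ∂μ
      ≤ ‖∫ x, ∑ i, x i * fderiv ℝ (fun y => ‖F y‖ ^ 2) x (EuclideanSpace.single i 1) ∂μ‖ := by
        rw [integral_sum_coord_mul_fderiv_norm_sq hF hF_int hxF_int hdF_int, norm_neg, Real.norm_eq_abs]; exact le_abs_self _
    _ ≤ ∫ x, 2 * (√(‖x‖ ^ 2 * ‖F x‖ ^ 2) * √(dF x)) ∂μ := by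
        refine norm_integral_le_of_norm_le hbound (Filter.Eventually.of_forall fun x => ?_)
        rw [Real.norm_eq_abs, Real.sqrt_mul (by positivity), Real.sqrt_sq (norm_nonneg _),
          Real.sqrt_sq (norm_nonneg _)]
        linarith [abs_sum_coord_mul_fderiv_norm_sq_le (hF x)]
    _ ≤ 2 * (√(∫ x, ‖x‖ ^ 2 * ‖F x‖ ^ 2 ∂μ) * √(∫ x, dF x ∂μ)) := by
        rw [integral_const_mul]
        gcongr
        exact integral_sqrt_mul_sqrt_le hxF_int hdF_int
          (Filter.Eventually.of_forall fun x => by positivity)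
          (Filter.Eventually.of_forall fun x => by positivity)
    _ = _ := by ring

end Uncertainty

theorem abs_le_mul_sub_of_tendsto_zero_of_abs_deriv_le {f : ℝ → ℝ} {a b B : ℝ}
    (hf0 : Filter.Tendsto f (nhdsWithin b (Set.Iio b)) (nhds 0))
    (hf : ∀ t ∈ Set.Ioo a b, DifferentiableAt ℝ f t ∧ |deriv f t| ≤ B)
    {t : ℝ} (ht : t ∈ Set.Ioo a b) : |f t| ≤ B * (b - t) := by
  have hlip : ∀ᶠ s in nhdsWithin b (Set.Iio b), |f t - f s| ≤ B * (b - t) := by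
    filter_upwards [Ioo_mem_nhdsLT ht.2] with s hs
    have hs' : s ∈ Set.Ioo a b := ⟨ht.1.trans hs.1, hs.2⟩
    calc |f t - f s| ≤ B * ‖t - s‖ :=
          (convex_Ioo a b).norm_image_sub_le_of_norm_deriv_le (fun x hx => (hf x hx).1)
            (fun x hx => (hf x hx).2) hs' ht
      _ ≤ B * (b - t) := by
          have hB : 0 ≤ B := (abs_nonneg _).trans (hf t ht).2
          rw [Real.norm_eq_abs, abs_of_neg (by linarith [hs.1])]
          gcongr; linarith [hs.2]
  simpa using le_of_tendsto (hf0.const_sub (f t)).abs hlip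

/-- Lower bound on the blowup rate: if the variance `J(t) = ∫|x|²|u(t)|²` tends to `0`
as `t → T⁻` with `J'` bounded near `T`, and the mass is conserved, then
`‖∇u(t)‖₂ ≥ c₀ ‖u₀‖₂ / √(T − t)` near `T`. -/
theorem stmt_10 (n : ℕ) (hn : 1 ≤ n) (u : ℝ → EuclideanSpace ℝ (Fin n) → ℂ)
    (T : ℝ) (hT : 0 < T)
    (hdiff : ∀ t ∈ Set.Ico (0 : ℝ) T, Differentiable ℝ (u t))
    (hint1 : ∀ t ∈ Set.Ico (0 : ℝ) T, Integrable fun x => ‖u t x‖ ^ 2)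
    (hint2 : ∀ t ∈ Set.Ico (0 : ℝ) T,
      Integrable fun x => ∑ i, ‖fderiv ℝ (u t) x (EuclideanSpace.single i 1)‖ ^ 2)
    (hint3 : ∀ t ∈ Set.Ico (0 : ℝ) T, Integrable fun x => ‖x‖ ^ 2 * ‖u t x‖ ^ 2)
    (hmass : ∀ t ∈ Set.Ico (0 : ℝ) T, ∫ x, ‖u t x‖ ^ 2 = ∫ x, ‖u 0 x‖ ^ 2)
    (J : ℝ → ℝ) (hJ : ∀ t ∈ Set.Ico (0 : ℝ) T, J t = ∫ x, ‖x‖ ^ 2 * ‖u t x‖ ^ 2)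
    (hJ0 : Filter.Tendsto J (nhdsWithin T (Set.Iio T)) (nhds 0))
    (hJ' : ∃ B ε : ℝ, 0 < ε ∧ 0 < B ∧ ∀ t ∈ Set.Ioo (T - ε) T,
      DifferentiableAt ℝ J t ∧ |deriv J t| ≤ B) :
    ∃ c₀ ε : ℝ, 0 < c₀ ∧ 0 < ε ∧ ∀ t ∈ Set.Ioo (T - ε) T,
      c₀ * Real.sqrt (∫ x, ‖u 0 x‖ ^ 2) / Real.sqrt (T - t) ≤
        Real.sqrt (∫ x, ∑ i, ‖fderiv ℝ (u t) x (EuclideanSpace.single i 1)‖ ^ 2) := by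
  obtain ⟨B, ε, hε, hB, hJ'⟩ := hJ'
  set M := ∫ x, ‖u 0 x‖ ^ 2
  set G := fun t => ∫ x, ∑ i, ‖fderiv ℝ (u t) x (EuclideanSpace.single i 1)‖ ^ 2
  have key : ∀ t ∈ Set.Ioo (T - min ε T) T, n * M ≤ 2 * √B * √(T - t) * √(G t) := by
    intro t ⟨ht, htT⟩
    have ht0 : t ∈ Set.Ico 0 T := ⟨by linarith [min_le_right ε T], htT⟩
    have hJt := abs_le_mul_sub_of_tendsto_zero_of_abs_deriv_le hJ0 hJ'
      ⟨by linarith [min_le_left ε T], htT⟩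
    have hUP := heisenberg_uncertainty (hdiff t ht0) (hint1 t ht0) (hint3 t ht0) (hint2 t ht0)
    rw [Fintype.card_fin, hmass t ht0, ← hJ t ht0] at hUP
    calc n * M ≤ 2 * √(J t) * √(G t) := hUP
      _ ≤ 2 * √(B * (T - t)) * √(G t) := by gcongr; exact (le_abs_self _).trans hJt
      _ = 2 * √B * √(T - t) * √(G t) := by rw [Real.sqrt_mul hB.le]; ring
  have hM0 : 0 ≤ M := integral_nonneg fun x => by positivity
  rcases hM0.eq_or_lt with hM | hM
  · exact ⟨1, min ε T, one_pos, lt_min hε hT, fun t _ => by simp [← hM]⟩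
  refine ⟨n * √M / (2 * √B), min ε T, by positivity, lt_min hε hT, fun t ht => ?_⟩
  have hs : 0 < √(T - t) := Real.sqrt_pos.2 (by linarith [ht.2])
  rw [div_le_iff₀ hs, div_mul_eq_mul_div, div_le_iff₀ (by positivity), mul_assoc,
    Real.mul_self_sqrt hM0]
  linarith [key t ht]
end

section
/- Let γ > 0, E ∈ ℝ with E ≤ (γ^2/2)J(0), and let J : [0, T) → [0, ∞) be C^2 satisfying the integral identity J(t) = C sin(2γt + β) + E/γ^2 + ∫_0^t (sin(2γ(t−s))/(2γ)) f(s) ds, where f(s) ≤ 0 for all s, C ≥ |E|/γ^2, C sin β ≥ 0, β ∈ (0, π). Then J(t) ≤ C sin(2γt + β) + E/γ^2 fails to stay nonnegative beyond time 3π/(4γ); i.e., there exists T_* ≤ 3π/(4γ) with J(T_*) = 0. -/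
/-!
At the half period `t₀ = π/(2γ)` the free oscillation `C sin(2γt + β) + E/γ²` has dropped to
`E/γ² - C sin β`, and evaluating the identity at `t = 0` turns `E ≤ (γ²/2) J(0)` into
`E/γ² ≤ C sin β`. The Duhamel term is nonpositive up to `t₀`, since its kernel
`sin(2γ(t₀ - s))` is nonnegative on `[0, t₀]` while `f ≤ 0`. Hence `J(t₀) ≤ 0`, and
nonnegativity of `J` forces `J(t₀) = 0`, with `t₀ ≤ 3π/(4γ)`.
-/

theorem Real.sin_mul_pi_div_add (ω β : ℝ) (hω : ω ≠ 0) :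
    Real.sin (ω * (Real.pi / ω) + β) = -Real.sin β := by
  rw [mul_div_cancel₀ _ hω, add_comm, Real.sin_add_pi]

theorem integral_sin_kernel_mul_nonpos {ω t : ℝ} {f : ℝ → ℝ} (hω : 0 < ω) (ht : 0 ≤ t)
    (htπ : ω * t ≤ Real.pi) (hf : ∀ s ∈ Set.Icc 0 t, f s ≤ 0) :
    ∫ s in (0 : ℝ)..t, Real.sin (ω * (t - s)) / ω * f s ≤ 0 := by
  have hneg : 0 ≤ ∫ s in (0 : ℝ)..t, -(Real.sin (ω * (t - s)) / ω * f s) := by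
    refine intervalIntegral.integral_nonneg ht fun s hs => ?_
    have hkernel : 0 ≤ Real.sin (ω * (t - s)) :=
      Real.sin_nonneg_of_nonneg_of_le_pi (by nlinarith [hs.2]) (by nlinarith [hs.1])
    exact neg_nonneg.2 (mul_nonpos_of_nonneg_of_nonpos (div_nonneg hkernel hω.le) (hf s hs))
  rwa [intervalIntegral.integral_neg, neg_nonneg] at hneg

theorem div_sq_le_of_le_half_sq_mul_add {γ E a : ℝ} (hγ : γ ≠ 0)
    (hE : E ≤ γ ^ 2 / 2 * (a + E / γ ^ 2)) : E / γ ^ 2 ≤ a := by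
  have hγ2 : 0 < γ ^ 2 := by positivity
  have hsplit : γ ^ 2 / 2 * (a + E / γ ^ 2) = γ ^ 2 * a / 2 + E / 2 := by
    field_simp
  rw [div_le_iff₀ hγ2]
  linarith

theorem stmt_15_general (γ E C β T : ℝ) (hγ : 0 < γ)
    (hT : 3 * Real.pi / (4 * γ) < T)
    (J f : ℝ → ℝ)
    (hnonneg : ∀ t ∈ Set.Ico (0 : ℝ) T, 0 ≤ J t)
    (hf : ∀ s ∈ Set.Ico (0 : ℝ) T, f s ≤ 0)
    (hE : E ≤ γ ^ 2 / 2 * J 0)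
    (hid : ∀ t ∈ Set.Ico (0 : ℝ) T,
      J t = C * Real.sin (2 * γ * t + β) + E / γ ^ 2 +
        ∫ s in (0 : ℝ)..t, Real.sin (2 * γ * (t - s)) / (2 * γ) * f s) :
    ∃ T', 0 ≤ T' ∧ T' ≤ 3 * Real.pi / (4 * γ) ∧ J T' = 0 := by
  set t₀ := Real.pi / (2 * γ)
  have ht₀ : 0 < t₀ := by positivity
  have ht₀_le : t₀ ≤ 3 * Real.pi / (4 * γ) := by
    rw [div_le_div_iff₀ (by positivity) (by positivity)]
    nlinarith [Real.pi_pos]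
  have hIco : ∀ t ∈ Set.Icc 0 t₀, t ∈ Set.Ico 0 T := fun t ht =>
    ⟨ht.1, ht.2.trans_lt (ht₀_le.trans_lt hT)⟩
  have hJ₀ : J 0 = C * Real.sin β + E / γ ^ 2 := by
    simpa using hid 0 (hIco 0 ⟨le_rfl, ht₀.le⟩)
  have hfree : E / γ ^ 2 ≤ C * Real.sin β :=
    div_sq_le_of_le_half_sq_mul_add hγ.ne' (hJ₀ ▸ hE)
  have hduhamel := integral_sin_kernel_mul_nonpos (f := f) (by positivity : 0 < 2 * γ) ht₀.le
    (mul_div_cancel₀ _ (by positivity)).le fun s hs => hf s (hIco s hs)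
  have hJt₀ := hid t₀ (hIco t₀ ⟨ht₀.le, le_rfl⟩)
  rw [Real.sin_mul_pi_div_add _ _ (by positivity)] at hJt₀
  exact ⟨t₀, ht₀.le, ht₀_le, le_antisymm (by linarith) (hnonneg t₀ (hIco t₀ ⟨ht₀.le, le_rfl⟩))⟩

/-- Inhomogeneous virial argument: if a nonnegative `J` satisfies the
variation-of-parameters identity `J(t) = C sin(2γt+β) + E/γ² + ∫₀ᵗ sin(2γ(t−s))/(2γ) f(s) ds`
with `f ≤ 0`, `C ≥ |E|/γ²`, `C sin β ≥ 0` and `β ∈ (0,π)`, then `J` vanishes at some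
time `T_* ≤ 3π/(4γ)`. -/
theorem stmt_15 (γ E C β T : ℝ) (hγ : 0 < γ)
    (hT : 3 * Real.pi / (4 * γ) < T)
    (hC : |E| / γ ^ 2 ≤ C) (hβ : β ∈ Set.Ioo 0 Real.pi)
    (hCs : 0 ≤ C * Real.sin β)
    (J f : ℝ → ℝ) (hJC : ContDiff ℝ 2 J)
    (hnonneg : ∀ t ∈ Set.Ico (0 : ℝ) T, 0 ≤ J t)
    (hf : ∀ s ∈ Set.Ico (0 : ℝ) T, f s ≤ 0)
    (hE : E ≤ γ ^ 2 / 2 * J 0)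
    (hid : ∀ t ∈ Set.Ico (0 : ℝ) T,
      J t = C * Real.sin (2 * γ * t + β) + E / γ ^ 2 +
        ∫ s in (0 : ℝ)..t, Real.sin (2 * γ * (t - s)) / (2 * γ) * f s) :
    ∃ T', 0 ≤ T' ∧ T' ≤ 3 * Real.pi / (4 * γ) ∧ J T' = 0 :=
  stmt_15_general γ E C β T hγ hT J f hnonneg hf hE hid
end

section
/- With ψ_m as above and Ω > γ > 0, the energy E_{Ω,γ}(ψ_m) = (|m|+1)γ − Ωm − ∫G(|ψ_m|^2) satisfies E_{Ω,γ}(ψ_m) ≤ (|m|+1)γ − Ωm → −∞ as m → +∞, where G ≥ 0. Hence the infimum I_1 = inf{E_{Ω,γ}(u) : ‖u‖_2 = 1} equals −∞. -/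
open MeasureTheory

/-- The vortex test function on `ℝ² ≃ ℂ`. -/
noncomputable def vortex (γ : ℝ) (m : ℤ) (z : ℂ) : ℂ :=
  ((γ ^ (((m.natAbs : ℝ) + 1) / 2) / Real.sqrt (Real.pi * (Nat.factorial m.natAbs)) *
      ‖z‖ ^ m.natAbs * Real.exp (-γ * ‖z‖ ^ 2 / 2) : ℝ) : ℂ) *
    Complex.exp (Complex.I * (m : ℂ) * (Complex.arg z : ℂ))

/-- The rotational energy functional
`E_{Ω,γ}(u) = (1/2)∫|∇u|² + (γ²/2)∫|x|²|u|² − Ω ∫ ū L_z u − ∫ G(|u|²)` on ℝ². -/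
noncomputable def rotEnergy (γ Ω : ℝ) (G : ℝ → ℝ) (u : ℂ → ℂ) : ℝ :=
  (1 / 2) * (∫ z : ℂ, (‖fderiv ℝ u z 1‖ ^ 2 + ‖fderiv ℝ u z Complex.I‖ ^ 2)) +
    γ ^ 2 / 2 * (∫ z : ℂ, ‖z‖ ^ 2 * ‖u z‖ ^ 2) -
    Ω * (∫ z : ℂ, (starRingEnd ℂ) (u z) *
      (-Complex.I * deriv (fun t : ℝ => u (Complex.exp (Complex.I * (t : ℂ)) * z)) 0)).re -
    ∫ z : ℂ, G (‖u z‖ ^ 2)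

/-!
For `m ≥ 0` the vortex is `ψ_m = c_m z^m e^{-γ|z|²/2}`, so `|ψ_m|²` is a multiple of the Gaussian
weight `|z|^{2m} e^{-γ|z|²}`, whose moments over `ℂ` are `π k! / γ^{k+1}`. Rotating `z` by `e^{it}`
multiplies `ψ_m` by `e^{imt}`, so `L_z ψ_m = m ψ_m`; the potential term is `(m+1)/γ`; and writing
`Dψ_m = ∂ψ_m dz + ∂̄ψ_m dz̄`, so that `|∇ψ_m|² = 2(|∂ψ_m|² + |∂̄ψ_m|²)`, the kinetic term is
`(m+1)γ`. Hence `E(ψ_m) = (m+1)γ − Ωm − ∫ G(|ψ_m|²) ≤ (m+1)γ − Ωm`, which tends to `−∞` when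
`Ω > γ`, along a sequence of functions of unit mass.
-/

open Complex ComplexConjugate Nat

noncomputable def gaussWeight (γ : ℝ) (k : ℕ) (z : ℂ) : ℝ :=
  ‖z‖ ^ (2 * k) * Real.exp (-γ * ‖z‖ ^ 2)

theorem gaussWeight_succ (γ : ℝ) (m : ℕ) (z : ℂ) :
    gaussWeight γ (m + 1) z = ‖z‖ ^ 2 * gaussWeight γ m z := by
  rw [gaussWeight, gaussWeight]
  ring

theorem integral_gaussWeight {γ : ℝ} (hγ : 0 < γ) (k : ℕ) :
    ∫ z, gaussWeight γ k z = Real.pi * k ! / γ ^ (k + 1) := by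
  have h := Complex.integral_rpow_mul_exp_neg_mul_rpow (p := 2) (q := (2 * k : ℕ))
    one_le_two ((neg_lt_zero.2 two_pos).trans_le (Nat.cast_nonneg _)) hγ
  have hexp : (-((2 * k : ℕ) + 2) / 2 : ℝ) = -((k + 1 : ℕ) : ℝ) := by push_cast; ring
  have harg : (((2 * k : ℕ) + 2) / 2 : ℝ) = k + 1 := by push_cast; ring
  simp only [Real.rpow_natCast, Real.rpow_two, hexp, harg, Real.rpow_neg hγ.le,
    Real.Gamma_nat_eq_factorial] at h
  unfold gaussWeight
  rw [h]
  ring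

-- A function whose Bochner integral is nonzero is integrable.
theorem integrable_gaussWeight {γ : ℝ} (hγ : 0 < γ) (k : ℕ) :
    Integrable (gaussWeight γ k) :=
  .of_integral_ne_zero <| by rw [integral_gaussWeight hγ]; positivity

theorem norm_sq_apply_one_add_norm_sq_apply_I (a b : ℂ) :
    ‖(a • ContinuousLinearMap.id ℝ ℂ + b • (conjCLE : ℂ →L[ℝ] ℂ)) 1‖ ^ 2 +
      ‖(a • ContinuousLinearMap.id ℝ ℂ + b • (conjCLE : ℂ →L[ℝ] ℂ)) I‖ ^ 2 =
      2 * (‖a‖ ^ 2 + ‖b‖ ^ 2) := by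
  have h1 : (a • ContinuousLinearMap.id ℝ ℂ + b • (conjCLE : ℂ →L[ℝ] ℂ)) 1 = a + b := by simp
  have hI : (a • ContinuousLinearMap.id ℝ ℂ + b • (conjCLE : ℂ →L[ℝ] ℂ)) I = I * (a - b) := by
    simp only [add_apply, smul_apply, ContinuousLinearMap.id_apply, smul_eq_mul,
      ContinuousLinearEquiv.coe_coe, ContinuousAlgEquiv.coeCLE_apply, conjCAE_apply, conj_I,
      mul_neg]
    ring
  rw [h1, hI, norm_mul, norm_I, one_mul]
  simpa only [sq] using parallelogram_law_with_norm ℝ a b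

noncomputable def gaussVortex (c : ℂ) (γ : ℝ) (m : ℕ) (z : ℂ) : ℂ :=
  c * cexp (-(γ / 2 : ℂ) * (z * conj z)) * z ^ m

theorem norm_cexp_neg_mul_mul_conj_sq (γ : ℝ) (z : ℂ) :
    ‖cexp (-(γ / 2 : ℂ) * (z * conj z))‖ ^ 2 = Real.exp (-γ * ‖z‖ ^ 2) := by
  rw [Complex.norm_exp, mul_conj, ← Real.exp_nat_mul, ← ofReal_ofNat, ← ofReal_div, ← ofReal_neg,
    ← ofReal_mul, ofReal_re, normSq_eq_norm_sq]
  ring_nf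

theorem norm_gaussVortex_sq (c : ℂ) (γ : ℝ) (m : ℕ) (z : ℂ) :
    ‖gaussVortex c γ m z‖ ^ 2 = ‖c‖ ^ 2 * gaussWeight γ m z := by
  rw [gaussVortex, norm_mul, norm_mul, mul_pow, mul_pow, norm_cexp_neg_mul_mul_conj_sq,
    gaussWeight, norm_pow, pow_mul']
  ring

theorem gaussVortex_cexp_I_mul (c : ℂ) (γ : ℝ) (m : ℕ) (t : ℝ) (z : ℂ) :
    gaussVortex c γ m (cexp (I * t) * z) = cexp (I * t) ^ m * gaussVortex c γ m z := by
  have hrot : cexp (I * t) * z * conj (cexp (I * t) * z) = z * conj z := by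
    rw [mul_conj, mul_conj, normSq_mul, normSq_eq_norm_sq (cexp _), norm_exp_I_mul_ofReal]
    simp
  rw [gaussVortex, gaussVortex, hrot]
  ring

theorem hasFDerivAt_gaussVortex (c : ℂ) (γ : ℝ) (m : ℕ) (z : ℂ) :
    HasFDerivAt (gaussVortex c γ m)
      ((c * cexp (-(γ / 2 : ℂ) * (z * conj z)) * (m * z ^ (m - 1) - γ / 2 * z ^ m * conj z)) •
          ContinuousLinearMap.id ℝ ℂ +
        (c * cexp (-(γ / 2 : ℂ) * (z * conj z)) * (-(γ / 2) * z ^ (m + 1))) •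
          (conjCLE : ℂ →L[ℝ] ℂ)) z := by
  have hE : HasFDerivAt (fun w : ℂ => cexp (-(γ / 2 : ℂ) * (w * conj w))) _ z :=
    (((hasFDerivAt_id (𝕜 := ℝ) z).mul conjCLE.hasFDerivAt).const_mul _).cexp
  refine HasFDerivAt.congr_fderiv
    ((hE.const_mul c).mul ((hasDerivAt_pow m z).hasFDerivAt.restrictScalars ℝ)) ?_
  ext v
  simp only [neg_mul, ContinuousAlgEquiv.coe_coeCLE, Pi.mul_apply, id_eq, conjCAE_apply,
    ContinuousAlgEquiv.coeCLE_apply, smul_add, neg_smul, smul_neg, add_apply, smul_apply,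
    ContinuousLinearMap.coe_restrictScalars',
    ContinuousLinearMap.toSpanSingleton_apply, smul_eq_mul, neg_apply,
    ContinuousLinearEquiv.coe_coe, ContinuousLinearMap.id_apply, mul_neg]
  ring

theorem norm_natCast_mul_pow_pred_sub_mul_conj_sq (γ : ℝ) (m : ℕ) (z : ℂ) :
    ‖(m : ℂ) * z ^ (m - 1) - γ / 2 * z ^ m * conj z‖ ^ 2 =
      m ^ 2 * ‖z‖ ^ (2 * (m - 1)) - γ * m * ‖z‖ ^ (2 * m) + γ ^ 2 / 4 * ‖z‖ ^ (2 * (m + 1)) := by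
  rcases m with _ | k
  · simp only [CharP.cast_eq_zero, zero_mul, zero_sub, pow_zero, mul_one, norm_neg, norm_mul,
      norm_div, norm_real, Real.norm_eq_abs, norm_conj]
    rw [mul_pow, div_pow, sq_abs, Complex.norm_two]
    ring
  · have h : ((k + 1 : ℕ) : ℂ) * z ^ (k + 1 - 1) - γ / 2 * z ^ (k + 1) * conj z =
        z ^ k * ((k + 1 - γ / 2 * ‖z‖ ^ 2 : ℝ) : ℂ) := by
      have hz : ((‖z‖ ^ 2 : ℝ) : ℂ) = z * conj z := by rw [mul_conj, normSq_eq_norm_sq]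
      rw [Nat.add_sub_cancel, ofReal_sub, ofReal_mul, hz]
      push_cast
      ring
    rw [h, norm_mul, norm_pow, norm_real, Real.norm_eq_abs, mul_pow, sq_abs, Nat.add_sub_cancel]
    push_cast
    ring

-- At `m = 0` the truncated `m - 1` is harmless: its coefficient `2 m²` vanishes.
theorem norm_fderiv_gaussVortex_one_sq_add_I_sq (c : ℂ) (γ : ℝ) (m : ℕ) (z : ℂ) :
    ‖fderiv ℝ (gaussVortex c γ m) z 1‖ ^ 2 + ‖fderiv ℝ (gaussVortex c γ m) z I‖ ^ 2 =
      ‖c‖ ^ 2 * (2 * m ^ 2 * gaussWeight γ (m - 1) z - 2 * γ * m * gaussWeight γ m z +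
        γ ^ 2 * gaussWeight γ (m + 1) z) := by
  rw [(hasFDerivAt_gaussVortex c γ m z).fderiv, norm_sq_apply_one_add_norm_sq_apply_I]
  simp only [norm_mul, mul_pow, norm_cexp_neg_mul_mul_conj_sq,
    norm_natCast_mul_pow_pred_sub_mul_conj_sq, gaussWeight, norm_neg, norm_div, norm_real,
    norm_pow, Real.norm_eq_abs, Complex.norm_two, div_pow, sq_abs]
  ring

noncomputable def vortexConst (γ : ℝ) (m : ℕ) : ℝ :=
  γ ^ (((m : ℝ) + 1) / 2) / Real.sqrt (Real.pi * m !)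

theorem vortexConst_sq {γ : ℝ} (hγ : 0 ≤ γ) (m : ℕ) :
    vortexConst γ m ^ 2 = γ ^ (m + 1) / (Real.pi * m !) := by
  rw [vortexConst, div_pow, Real.sq_sqrt (by positivity), ← Real.rpow_mul_natCast hγ]
  norm_cast
  rw [div_mul_cancel₀ _ two_ne_zero, Real.rpow_natCast]

theorem vortex_natCast (γ : ℝ) (m : ℕ) :
    vortex γ m = gaussVortex (vortexConst γ m) γ m := by
  ext z
  have hE : cexp (-(γ / 2 : ℂ) * (z * conj z)) = (Real.exp (-γ * ‖z‖ ^ 2 / 2) : ℂ) := by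
    rw [mul_conj, normSq_eq_norm_sq]; push_cast; ring_nf
  have hpolar : ((‖z‖ ^ m : ℝ) : ℂ) * cexp (I * m * arg z) = z ^ m := by
    rw [show I * m * arg z = m * (arg z * I) by ring, exp_nat_mul, ofReal_pow, ← mul_pow,
      norm_mul_exp_arg_mul_I]
  rw [vortex, gaussVortex, hE, ← hpolar, vortexConst]
  simp only [Int.natAbs_natCast, Int.cast_natCast]
  push_cast
  ring

theorem norm_vortex_sq (γ : ℝ) (m : ℕ) (z : ℂ) :
    ‖vortex γ m z‖ ^ 2 = vortexConst γ m ^ 2 * gaussWeight γ m z := by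
  rw [vortex_natCast, norm_gaussVortex_sq, norm_real, Real.norm_eq_abs, sq_abs]

theorem integral_norm_vortex_sq {γ : ℝ} (hγ : 0 < γ) (m : ℕ) :
    ∫ z, ‖vortex γ m z‖ ^ 2 = 1 := by
  simp_rw [norm_vortex_sq]
  rw [integral_const_mul, integral_gaussWeight hγ, vortexConst_sq hγ.le]
  field_simp

theorem integral_norm_sq_mul_norm_vortex_sq {γ : ℝ} (hγ : 0 < γ) (m : ℕ) :
    ∫ z, ‖z‖ ^ 2 * ‖vortex γ m z‖ ^ 2 = (m + 1) / γ := by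
  simp_rw [norm_vortex_sq, mul_left_comm (‖_‖ ^ 2), ← gaussWeight_succ]
  rw [integral_const_mul, integral_gaussWeight hγ, vortexConst_sq hγ.le, factorial_succ]
  push_cast
  field_simp
  ring

theorem integral_norm_fderiv_vortex_one_sq_add_I_sq {γ : ℝ} (hγ : 0 < γ) (m : ℕ) :
    ∫ z, (‖fderiv ℝ (vortex γ m) z 1‖ ^ 2 + ‖fderiv ℝ (vortex γ m) z I‖ ^ 2) = (m + 1) * γ := by
  simp_rw [vortex_natCast, norm_fderiv_gaussVortex_one_sq_add_I_sq, norm_real, Real.norm_eq_abs,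
    sq_abs]
  have hW (a : ℝ) (k : ℕ) : Integrable fun z => a * gaussWeight γ k z :=
    (integrable_gaussWeight hγ k).const_mul a
  have hsub : Integrable fun z =>
      2 * m ^ 2 * gaussWeight γ (m - 1) z - 2 * γ * m * gaussWeight γ m z :=
    (hW _ _).sub (hW _ _)
  rw [integral_const_mul, integral_add hsub (hW _ _), integral_sub (hW _ _) (hW _ _),
    integral_const_mul, integral_const_mul, integral_const_mul, integral_gaussWeight hγ,
    integral_gaussWeight hγ, integral_gaussWeight hγ, vortexConst_sq hγ.le]
  rcases m with _ | k
  · field_simp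
    ring
  · rw [Nat.add_sub_cancel, factorial_succ (k + 1), factorial_succ k]
    push_cast
    field_simp
    ring

theorem hasDerivAt_vortex_cexp_I_mul (γ : ℝ) (m : ℕ) (z : ℂ) :
    HasDerivAt (fun t : ℝ => vortex γ m (cexp (I * t) * z)) (I * m * vortex γ m z) 0 := by
  have hrot : (fun t : ℝ => vortex γ m (cexp (I * t) * z)) =
      fun t : ℝ => cexp (m * I * t) * vortex γ m z := by
    ext t
    rw [vortex_natCast, gaussVortex_cexp_I_mul, ← exp_nat_mul, mul_assoc]
  have h := ((((hasDerivAt_id (0 : ℝ)).ofReal_comp).const_mul ((m : ℂ) * I)).cexp).mul_const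
    (vortex γ m z)
  rw [hrot]
  refine h.congr_deriv ?_
  simp only [id, ofReal_zero, mul_zero, Complex.exp_zero, one_mul, ofReal_one, mul_one]
  ring

theorem integral_angularMomentum_vortex {γ : ℝ} (hγ : 0 < γ) (m : ℕ) :
    (∫ z, conj (vortex γ m z) *
      (-I * deriv (fun t : ℝ => vortex γ m (cexp (I * t) * z)) 0)).re = m := by
  have hpt (z : ℂ) : conj (vortex γ m z) *
      (-I * deriv (fun t : ℝ => vortex γ m (cexp (I * t) * z)) 0) =
        ((m * ‖vortex γ m z‖ ^ 2 : ℝ) : ℂ) := by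
    rw [(hasDerivAt_vortex_cexp_I_mul γ m z).deriv, ofReal_mul, ofReal_pow, ← mul_conj',
      ofReal_natCast]
    linear_combination (-(m : ℂ) * vortex γ m z * conj (vortex γ m z)) * I_sq
  simp_rw [hpt]
  rw [integral_complex_ofReal, ofReal_re, integral_const_mul, integral_norm_vortex_sq hγ, mul_one]

theorem rotEnergy_vortex {γ : ℝ} (hγ : 0 < γ) (Ω : ℝ) (G : ℝ → ℝ) (m : ℕ) :
    rotEnergy γ Ω G (vortex γ m) = (m + 1) * γ - Ω * m - ∫ z, G (‖vortex γ m z‖ ^ 2) := by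
  rw [rotEnergy, integral_norm_fderiv_vortex_one_sq_add_I_sq hγ,
    integral_norm_sq_mul_norm_vortex_sq hγ, integral_angularMomentum_vortex hγ]
  field_simp
  ring

/-- Fast rotation `Ω > γ` gives `E_{Ω,γ}(ψ_m) ≤ (|m|+1)γ − Ωm → −∞`, hence the
constrained infimum of the energy on the unit-mass sphere is `−∞`. -/
theorem stmt_17 (γ Ω : ℝ) (hγ : 0 < γ) (hΩ : γ < Ω) (G : ℝ → ℝ)
    (hG : ∀ s, 0 ≤ s → 0 ≤ G s) :
    (∀ m : ℕ, rotEnergy γ Ω G (vortex γ (m : ℤ)) ≤ ((m : ℝ) + 1) * γ - Ω * (m : ℝ)) ∧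
    Filter.Tendsto (fun m : ℕ => rotEnergy γ Ω G (vortex γ (m : ℤ))) Filter.atTop Filter.atBot ∧
    ¬ BddBelow {r : ℝ | ∃ u : ℂ → ℂ, (∫ z : ℂ, ‖u z‖ ^ 2) = 1 ∧ r = rotEnergy γ Ω G u} := by
  have hle (m : ℕ) : rotEnergy γ Ω G (vortex γ m) ≤ (m + 1) * γ - Ω * m := by
    rw [rotEnergy_vortex hγ]
    have hGint : 0 ≤ ∫ z, G (‖vortex γ m z‖ ^ 2) :=
      integral_nonneg fun z => hG _ (sq_nonneg _)
    linarith
  have hbound : Filter.Tendsto (fun m : ℕ => ((m : ℝ) + 1) * γ - Ω * m) .atTop .atBot := by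
    have h := (tendsto_natCast_atTop_atTop (R := ℝ)).const_mul_atTop_of_neg (sub_neg.2 hΩ)
    exact (Filter.tendsto_atBot_add_const_right _ γ h).congr fun m => by ring
  have htend := Filter.tendsto_atBot_mono hle hbound
  refine ⟨hle, htend, fun hbdd => Filter.not_bddBelow_of_tendsto_atBot htend (hbdd.mono ?_)⟩
  rintro _ ⟨m, rfl⟩
  exact ⟨vortex γ m, integral_norm_vortex_sq hγ m, rfl⟩
end
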